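/- Let G be a C_5-free graph with minimum degree at least n/4 − 1 on n ≥ 68 vertices, and let xy be an edge of G contained in the most triangles. Then the common neighborhood W = N(x) ∩ N(y) satisfies |W| ≤ 2. -/

import Mathlib

open SimpleGraph Finset Function

noncomputable local instance {V : Type*} (G : SimpleGraph V) : DecidableRel G.Adj :=
  fun _ _ => Classical.dec _

/-- `G` contains a copy of the 5-cycle as a subgraph. -/
def HasC5Copy {V : Type*} (G : SimpleGraph V) : Prop :=
  ∃ f : Fin 5 → V, Injective f ∧ ∀ i, G.Adj (f i) (f (i + 1))

/-- `G` contains two vertex-disjoint copies of the 5-cycle. -/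
def HasTwoDisjointC5 {V : Type*} (G : SimpleGraph V) : Prop :=
  ∃ f g : Fin 5 → V, Injective f ∧ Injective g ∧
    (∀ i, G.Adj (f i) (f (i + 1))) ∧ (∀ i, G.Adj (g i) (g (i + 1))) ∧
    ∀ i j, f i ≠ g j

/-- The join of two graphs. -/
def GraphJoin {V W : Type*} (G : SimpleGraph V) (H : SimpleGraph W) : SimpleGraph (V ⊕ W) where
  Adj x y :=
    match x, y with
    | Sum.inl a, Sum.inl b => G.Adj a b
    | Sum.inr a, Sum.inr b => H.Adj a b
    | Sum.inl _, Sum.inr _ => True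
    | Sum.inr _, Sum.inl _ => True
  symm := ⟨by rintro (a|a) (b|b) h <;> simp_all <;> exact h.symm⟩
  loopless := ⟨by rintro (a|a) h; exacts [G.irrefl h, H.irrefl h]⟩

/-- `G` contains `k` pairwise vertex-disjoint copies of `K_r`. -/
def HasDisjointCliques {V : Type*} (G : SimpleGraph V) (k r : ℕ) : Prop :=
  ∃ f : Fin k → Finset V, (∀ i, G.IsNClique r (f i)) ∧
    ∀ i j, i ≠ j → Disjoint (f i) (f j)

/-- Six pairwise vertex-disjoint copies of `P₄` inside the neighborhood of `v`. -/
def SixDisjointP4InNbhd {V : Type*} (G : SimpleGraph V) (v : V) : Prop :=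
  ∃ f : Fin 6 → Fin 4 → V,
    Injective (fun p : Fin 6 × Fin 4 => f p.1 p.2) ∧
    (∀ i j, G.Adj v (f i j)) ∧
    (∀ i, G.Adj (f i 0) (f i 1) ∧ G.Adj (f i 1) (f i 2) ∧ G.Adj (f i 2) (f i 3))

/-- `u` is joined to (at least) `t` pairwise disjoint `r`-cliques inside `S`. -/
def JoinedToDisjointCliques {V : Type*} (G : SimpleGraph V) (u : V) (S : Set V) (t r : ℕ) : Prop :=
  ∃ f : Fin t → Finset V, (∀ j, ↑(f j) ⊆ S ∧ G.IsNClique r (f j) ∧ ∀ w ∈ f j, G.Adj u w) ∧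
    ∀ i j, i ≠ j → Disjoint (f i) (f j)



lemma mkC5 {V : Type*} {G : SimpleGraph V} {a b c d e : V}
    (h1 : G.Adj a b) (h2 : G.Adj b c) (h3 : G.Adj c d) (h4 : G.Adj d e) (h5 : G.Adj e a)
    (hac : a ≠ c) (had : a ≠ d) (hbd : b ≠ d) (hbe : b ≠ e) (hce : c ≠ e) :
    HasC5Copy G := by
  have hab := h1.ne; have hbc := h2.ne; have hcd := h3.ne; have hde := h4.ne
  have hea := h5.ne
  refine ⟨![a,b,c,d,e], ?_, ?_⟩
  · intro i j hij
    fin_cases i <;> fin_cases j <;> simp_all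
  · intro i
    fin_cases i <;> simp [h1, h2, h3, h4, h5]


/-- In a `C₅`-free graph on `n ≥ 68` vertices with minimum degree at least `n/4 - 1`,
if `xy` is an edge contained in the most triangles, then `|N(x) ∩ N(y)| ≤ 2`. -/
theorem stmt15 (n : ℕ) (hn : 68 ≤ n) (G : SimpleGraph (Fin n)) (hG : ¬ HasC5Copy G)
    (hdeg : ∀ v : Fin n, (n : ℝ) / 4 - 1 ≤ (G.degree v : ℝ))
    (x y : Fin n) (hxy : G.Adj x y)
    (hmax : ∀ a b : Fin n, G.Adj a b →
      (G.neighborFinset a ∩ G.neighborFinset b).card ≤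
        (G.neighborFinset x ∩ G.neighborFinset y).card) :
    (G.neighborFinset x ∩ G.neighborFinset y).card ≤ 2 := by
  by_contra hW
  push_neg at hW
  set W := G.neighborFinset x ∩ G.neighborFinset y with hWdef
  have hWmem : ∀ w ∈ W, G.Adj x w ∧ G.Adj y w := by
    intro w hw
    simp only [hWdef, Finset.mem_inter, SimpleGraph.mem_neighborFinset] at hw
    exact hw
  have hxny : x ≠ y := hxy.ne
  -- key1 : no common neighbor of x and w ∈ W other than y
  have key1 : ∀ w z : Fin n, w ∈ W → G.Adj w z → G.Adj x z → z ≠ y → False := by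
    intro w z hwW hwz hxz hzy
    have hns : ¬ W ⊆ {w, z} := by
      intro hsub
      have h1 := Finset.card_le_card hsub
      have h2 : ({w, z} : Finset (Fin n)).card ≤ 2 :=
        (Finset.card_insert_le _ _).trans (by simp)
      omega
    obtain ⟨w', hw'W, hw'⟩ := Finset.not_subset.mp hns
    simp only [Finset.mem_insert, Finset.mem_singleton, not_or] at hw'
    obtain ⟨hxw', hyw'⟩ := hWmem w' hw'W
    obtain ⟨hxw, hyw⟩ := hWmem w hwW
    -- cycle z x w' y w
    exact hG (mkC5 hxz.symm hxw' hyw'.symm hyw hwz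
      (Ne.symm hw'.2) hzy hxny hxw.ne hw'.1)
  have key2 : ∀ w z : Fin n, w ∈ W → G.Adj w z → G.Adj y z → z ≠ x → False := by
    intro w z hwW hwz hyz hzx
    have hns : ¬ W ⊆ {w, z} := by
      intro hsub
      have h1 := Finset.card_le_card hsub
      have h2 : ({w, z} : Finset (Fin n)).card ≤ 2 :=
        (Finset.card_insert_le _ _).trans (by simp)
      omega
    obtain ⟨w', hw'W, hw'⟩ := Finset.not_subset.mp hns
    simp only [Finset.mem_insert, Finset.mem_singleton, not_or] at hw'
    obtain ⟨hxw', hyw'⟩ := hWmem w' hw'W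
    obtain ⟨hxw, hyw⟩ := hWmem w hwW
    -- cycle z y w' x w
    exact hG (mkC5 hyz.symm hyw' hxw'.symm hxw hwz
      (Ne.symm hw'.2) hzx hxny.symm hyw.ne hw'.1)
  have key3 : ∀ wa wb z : Fin n, wa ∈ W → wb ∈ W → wa ≠ wb →
      G.Adj wa z → G.Adj wb z → z ≠ x → z ≠ y → False := by
    intro wa wb z hwa hwb hab hwaz hwbz hzx hzy
    obtain ⟨hxwa, hywa⟩ := hWmem wa hwa
    obtain ⟨hxwb, hywb⟩ := hWmem wb hwb
    -- cycle x wa z wb y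
    exact hG (mkC5 hxwa hwaz hwbz.symm hywb.symm hxy.symm
      hzx.symm hxwb.ne hab (hywa.ne).symm hzy)
  -- pick three distinct elements of W
  obtain ⟨t, hts, ht3⟩ := Finset.exists_subset_card_eq (show 3 ≤ W.card by omega)
  obtain ⟨w1, w2, w3, h12, h13, h23, rfl⟩ := Finset.card_eq_three.mp ht3
  have hw1 : w1 ∈ W := hts (by simp)
  have hw2 : w2 ∈ W := hts (by simp)
  have hw3 : w3 ∈ W := hts (by simp)
  -- card bounds for the deleted neighborhoods, in ℝ
  have hbound : ∀ (v : Fin n) (S : Finset (Fin n)),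
      (n : ℝ) / 4 - 1 - S.card ≤ ((G.neighborFinset v \ S).card : ℝ) := by
    intro v S
    have h1 : (G.neighborFinset v).card ≤ (G.neighborFinset v \ S).card + S.card :=
      Finset.card_le_card_sdiff_add_card
    have h2 := hdeg v
    rw [SimpleGraph.degree] at h2
    have h1' : ((G.neighborFinset v).card : ℝ) ≤ ((G.neighborFinset v \ S).card : ℝ) + S.card := by
      exact_mod_cast h1
    linarith
  have hA := hbound x {y}
  simp only [Finset.card_singleton] at hA
  have hC1 := hbound w1 {x, y}
  have hC2 := hbound w2 {x, y}
  have hC3 := hbound w3 {x, y}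
  have hxyCard : ({x, y} : Finset (Fin n)).card = 2 := by
    rw [Finset.card_insert_of_notMem (by simp [hxny]), Finset.card_singleton]
  rw [hxyCard] at hC1 hC2 hC3
  set A := G.neighborFinset x \ {y} with hAdef
  set C1 := G.neighborFinset w1 \ {x, y} with hC1def
  set C2 := G.neighborFinset w2 \ {x, y} with hC2def
  set C3 := G.neighborFinset w3 \ {x, y} with hC3def
  -- disjointness facts
  have hdAC : ∀ w : Fin n, w ∈ W → Disjoint A (G.neighborFinset w \ {x, y}) := by
    intro w hw
    rw [Finset.disjoint_left]
    intro z hzA hzC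
    simp only [hAdef, Finset.mem_sdiff, SimpleGraph.mem_neighborFinset,
      Finset.mem_singleton, Finset.mem_insert, not_or] at hzA hzC
    exact key1 w z hw hzC.1 hzA.1 hzA.2
  have hdCC : ∀ wa wb : Fin n, wa ∈ W → wb ∈ W → wa ≠ wb →
      Disjoint (G.neighborFinset wa \ {x, y}) (G.neighborFinset wb \ {x, y}) := by
    intro wa wb hwa hwb hab
    rw [Finset.disjoint_left]
    intro z hza hzb
    simp only [Finset.mem_sdiff, SimpleGraph.mem_neighborFinset,
      Finset.mem_insert, Finset.mem_singleton, not_or] at hza hzb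
    exact key3 wa wb z hwa hwb hab hza.1 hzb.1 hza.2.1 hza.2.2
  have huniv : ∀ s : Finset (Fin n), (s.card : ℝ) ≤ n := by
    intro s
    have := Finset.card_le_univ s
    have h2 : (Finset.univ : Finset (Fin n)).card = n := by simp
    exact_mod_cast this.trans_eq h2
  rcases eq_or_lt_of_le (show 3 ≤ W.card from hW) with hcard3 | hcard4
  · -- |W| = 3, so W = {w1, w2, w3}
    have hWeq : W = {w1, w2, w3} := by
      symm
      apply Finset.eq_of_subset_of_card_le hts
      omega
    set B := G.neighborFinset y \ insert x W with hBdef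
    have hB := hbound y (insert x W)
    have hBcard : ((insert x W).card : ℝ) ≤ 4 := by
      have := Finset.card_insert_le x W
      have : (insert x W).card ≤ 4 := by omega
      exact_mod_cast this
    have hB' : (n : ℝ) / 4 - 5 ≤ (B.card : ℝ) := by
      rw [hBdef]; linarith
    -- disjointness
    have hdAB : Disjoint A B := by
      rw [Finset.disjoint_left]
      intro z hzA hzB
      simp only [hAdef, hBdef, Finset.mem_sdiff, SimpleGraph.mem_neighborFinset,
        Finset.mem_singleton, Finset.mem_insert, not_or] at hzA hzB
      exact hzB.2.2 (by simp [hWdef, SimpleGraph.mem_neighborFinset, hzA.1, hzB.1])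
    have hdBC : ∀ w : Fin n, w ∈ W → Disjoint B (G.neighborFinset w \ {x, y}) := by
      intro w hw
      rw [Finset.disjoint_left]
      intro z hzB hzC
      simp only [hBdef, Finset.mem_sdiff, SimpleGraph.mem_neighborFinset,
        Finset.mem_insert, Finset.mem_singleton, not_or] at hzB hzC
      exact key2 w z hw hzC.1 hzB.1 hzB.2.1
    have hsum : A.card + B.card + C1.card + C2.card + C3.card
        = (A ∪ B ∪ C1 ∪ C2 ∪ C3).card := by
      rw [Finset.card_union_of_disjoint, Finset.card_union_of_disjoint,
        Finset.card_union_of_disjoint, Finset.card_union_of_disjoint]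
      · exact hdAB
      · exact Finset.disjoint_union_left.mpr ⟨hdAC w1 hw1, hdBC w1 hw1⟩
      · exact Finset.disjoint_union_left.mpr ⟨Finset.disjoint_union_left.mpr
          ⟨hdAC w2 hw2, hdBC w2 hw2⟩, hdCC w1 w2 hw1 hw2 h12⟩
      · exact Finset.disjoint_union_left.mpr ⟨Finset.disjoint_union_left.mpr
          ⟨Finset.disjoint_union_left.mpr ⟨hdAC w3 hw3, hdBC w3 hw3⟩,
            hdCC w1 w3 hw1 hw3 h13⟩, hdCC w2 w3 hw2 hw3 h23⟩
    have hle : ((A ∪ B ∪ C1 ∪ C2 ∪ C3).card : ℝ) ≤ n := huniv _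
    have hsum' : (A.card : ℝ) + B.card + C1.card + C2.card + C3.card
        = ((A ∪ B ∪ C1 ∪ C2 ∪ C3).card : ℝ) := by exact_mod_cast hsum
    have hn' : (68 : ℝ) ≤ n := by exact_mod_cast hn
    linarith
  · -- |W| ≥ 4 : get a fourth element
    have hns : ¬ W ⊆ {w1, w2, w3} := by
      intro hsub
      have := Finset.card_le_card hsub
      omega
    obtain ⟨w4, hw4, hw4n⟩ := Finset.not_subset.mp hns
    simp only [Finset.mem_insert, Finset.mem_singleton, not_or] at hw4n
    set C4 := G.neighborFinset w4 \ {x, y} with hC4def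
    have hC4 := hbound w4 {x, y}
    rw [hxyCard] at hC4
    have hsum : A.card + C1.card + C2.card + C3.card + C4.card
        = (A ∪ C1 ∪ C2 ∪ C3 ∪ C4).card := by
      rw [Finset.card_union_of_disjoint, Finset.card_union_of_disjoint,
        Finset.card_union_of_disjoint, Finset.card_union_of_disjoint]
      · exact hdAC w1 hw1
      · exact Finset.disjoint_union_left.mpr ⟨hdAC w2 hw2, hdCC w1 w2 hw1 hw2 h12⟩
      · exact Finset.disjoint_union_left.mpr ⟨Finset.disjoint_union_left.mpr
          ⟨hdAC w3 hw3, hdCC w1 w3 hw1 hw3 h13⟩, hdCC w2 w3 hw2 hw3 h23⟩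
      · exact Finset.disjoint_union_left.mpr ⟨Finset.disjoint_union_left.mpr
          ⟨Finset.disjoint_union_left.mpr ⟨hdAC w4 hw4, hdCC w1 w4 hw1 hw4 (Ne.symm hw4n.1)⟩,
            hdCC w2 w4 hw2 hw4 (Ne.symm hw4n.2.1)⟩, hdCC w3 w4 hw3 hw4 (Ne.symm hw4n.2.2)⟩
    have hle : ((A ∪ C1 ∪ C2 ∪ C3 ∪ C4).card : ℝ) ≤ n := huniv _
    have hsum' : (A.card : ℝ) + C1.card + C2.card + C3.card + C4.card
        = ((A ∪ C1 ∪ C2 ∪ C3 ∪ C4).card : ℝ) := by exact_mod_cast hsum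
    have hn' : (68 : ℝ) ≤ n := by exact_mod_cast hn
    linarith
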